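/- arXiv:math/0508195 — 3 statements merged into one kernel-verified Lean document; each statement's English description precedes it below -/
import Mathlib

section
/- Let G be a locally compact group, μ a probability measure on G, and π a unitary representation of G. Then the spectral radius satisfies r_spec(π(μ)) ≤ (r_spec((π⊗π̄)(μ)))^{1/2}. -/
open MeasureTheory ContinuousLinearMap
open scoped InnerProductSpace

/-- Cauchy–Schwarz / Jensen: for a probability measure, `(∫ f)^2 ≤ ∫ f^2`. -/
lemma aux_sq_integral_le {α : Type*} [MeasurableSpace α] (μ : Measure α)
    [IsProbabilityMeasure μ] {f : α → ℝ} (hf : Integrable f μ)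
    (hf2 : Integrable (fun x => f x ^ 2) μ) :
    (∫ x, f x ∂μ) ^ 2 ≤ ∫ x, f x ^ 2 ∂μ := by
  set c := ∫ x, f x ∂μ with hc
  have h0 : 0 ≤ ∫ x, (f x - c) ^ 2 ∂μ := integral_nonneg fun x => sq_nonneg _
  have hexp : ∫ x, (f x - c) ^ 2 ∂μ = (∫ x, f x ^ 2 ∂μ) - c ^ 2 := by
    have he : ∀ x, (f x - c) ^ 2 = (f x ^ 2 - (2 * c) * f x) + c ^ 2 := by intro x; ring
    have hint1 : Integrable (fun x => f x ^ 2 - (2 * c) * f x) μ := hf2.sub (hf.const_mul _)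
    simp_rw [he]
    rw [integral_add hint1 (integrable_const _),
      integral_sub hf2 (hf.const_mul _), integral_const_mul, integral_const]
    simp only [measure_univ, probReal_univ, ENNReal.toReal_one, smul_eq_mul, one_mul, ← hc]
    ring
  linarith

/-- For a unitary representation `π` of a locally compact group `G`,
a probability measure `μ` on `G`, and every `n` and `ξ`,
the spectral radius satisfies `r(π(μ)) ≤ r((π⊗π̄)(μ))^{1/2}`.
Here `A = π(μ)` is defined weakly, `K` realizes the Hilbert space tensor product `H ⊗ H̄`
(via the map `J` with `⟪ξ⊗η̄, ξ'⊗η̄'⟫ = ⟪ξ,ξ'⟫⟪η',η⟫` and total range), `σ = π⊗π̄`,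
and `B = (π⊗π̄)(μ)` is defined weakly. -/
theorem spectral_radius_le_sqrt_tensor_spectral_radius
    {G H K : Type*} [Group G] [TopologicalSpace G] [IsTopologicalGroup G]
    [LocallyCompactSpace G] [MeasurableSpace G] [BorelSpace G]
    [NormedAddCommGroup H] [InnerProductSpace ℂ H] [CompleteSpace H]
    [NormedAddCommGroup K] [InnerProductSpace ℂ K] [CompleteSpace K]
    (μ : Measure G) [IsProbabilityMeasure μ]
    (π : G → H →L[ℂ] H) (hπu : ∀ g, π g ∈ unitary (H →L[ℂ] H))
    (hπ1 : π 1 = 1) (hπm : ∀ g h, π (g * h) = π g ∘L π h)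
    (hπc : ∀ ξ : H, Continuous fun g => π g ξ)
    (J : H → H → K)
    (hJtotal :
      (Submodule.span ℂ (Set.range fun p : H × H => J p.1 p.2)).topologicalClosure = ⊤)
    (hJinner : ∀ ξ η ξ' η' : H, ⟪J ξ η, J ξ' η'⟫_ℂ = ⟪ξ, ξ'⟫_ℂ * ⟪η', η⟫_ℂ)
    (σ : G → K →L[ℂ] K) (hσu : ∀ g, σ g ∈ unitary (K →L[ℂ] K))
    (hσJ : ∀ g (ξ η : H), σ g (J ξ η) = J (π g ξ) (π g η))
    (A : H →L[ℂ] H) (hA : ∀ ξ η : H, ⟪A ξ, η⟫_ℂ = ∫ x, ⟪π x ξ, η⟫_ℂ ∂μ)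
    (B : K →L[ℂ] K) (hB : ∀ κ κ' : K, ⟪B κ, κ'⟫_ℂ = ∫ x, ⟪σ x κ, κ'⟫_ℂ ∂μ)
    :
    spectralRadius ℂ A ≤ spectralRadius ℂ B ^ (1 / 2 : ℝ) := by
  classical
  -- adjoint facts
  have hinner_starH : ∀ (u : H →L[ℂ] H) (a b : H), ⟪u a, b⟫_ℂ = ⟪a, star u b⟫_ℂ := by
    intro u a b
    rw [ContinuousLinearMap.star_eq_adjoint, ContinuousLinearMap.adjoint_inner_right]
  have hinner_starK : ∀ (u : K →L[ℂ] K) (a b : K), ⟪u a, b⟫_ℂ = ⟪a, star u b⟫_ℂ := by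
    intro u a b
    rw [ContinuousLinearMap.star_eq_adjoint, ContinuousLinearMap.adjoint_inner_right]
  -- isometry facts
  have hπnorm : ∀ (g : G) (ξ : H), ‖π g ξ‖ = ‖ξ‖ := fun g ξ =>
    ContinuousLinearMap.norm_map_of_mem_unitary (hπu g) ξ
  have hσnorm : ∀ (g : G) (κ : K), ‖σ g κ‖ = ‖κ‖ := fun g κ =>
    ContinuousLinearMap.norm_map_of_mem_unitary (hσu g) κ
  -- `J (star (π x) η) (star (π x) η) = star (σ x) (J η η)`
  have hπstar_apply : ∀ (x : G) (v : H), π x (star (π x) v) = v := by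
    intro x v
    have h2 := (hπu x).2
    calc π x (star (π x) v) = ((π x) * star (π x)) v := rfl
      _ = v := by rw [h2]; rfl
  have hσstar_apply : ∀ (x : G) (w : K), star (σ x) (σ x w) = w := by
    intro x w
    have h1 := (hσu x).1
    calc star (σ x) (σ x w) = (star (σ x) * (σ x)) w := rfl
      _ = w := by rw [h1]; rfl
  have hJstar : ∀ (x : G) (η : H),
      J (star (π x) η) (star (π x) η) = star (σ x) (J η η) := by
    intro x η
    have h1 : σ x (J (star (π x) η) (star (π x) η)) = J η η := by
      rw [hσJ, hπstar_apply]
    have h2 : star (σ x) (σ x (J (star (π x) η) (star (π x) η))) = star (σ x) (J η η) := by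
      rw [h1]
    rw [hσstar_apply] at h2
    exact h2
  -- norm of J
  have hJnorm : ∀ a b : H, ‖J a b‖ = ‖a‖ * ‖b‖ := by
    intro a b
    have h2 : ⟪J a b, J a b⟫_ℂ = (((‖a‖ * ‖b‖) ^ 2 : ℝ) : ℂ) := by
      rw [hJinner, inner_self_eq_norm_sq_to_K, inner_self_eq_norm_sq_to_K]
      norm_cast
      exact congrArg _ (by show (‖a‖ ^ 2 * ‖b‖ ^ 2 : ℝ) = (‖a‖ * ‖b‖) ^ 2; ring)
    have h3 : ‖J a b‖ ^ 2 = (‖a‖ * ‖b‖) ^ 2 := by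
      have h4 := inner_self_eq_norm_sq (𝕜 := ℂ) (J a b)
      rw [h2] at h4
      simp only [RCLike.re_to_complex, Complex.ofReal_re] at h4
      exact h4.symm
    calc ‖J a b‖ = Real.sqrt (‖J a b‖ ^ 2) := (Real.sqrt_sq (norm_nonneg _)).symm
      _ = Real.sqrt ((‖a‖ * ‖b‖) ^ 2) := by rw [h3]
      _ = ‖a‖ * ‖b‖ := Real.sqrt_sq (by positivity)
  -- continuity of J
  have hJcont : Continuous fun p : H × H => J p.1 p.2 := by
    rw [continuous_iff_continuousAt]
    rintro ⟨a, b⟩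
    rw [ContinuousAt, tendsto_iff_norm_sub_tendsto_zero]
    have key : ∀ p : H × H, ‖J p.1 p.2 - J a b‖ =
        Real.sqrt (RCLike.re (⟪p.1, p.1⟫_ℂ * ⟪p.2, p.2⟫_ℂ - ⟪p.1, a⟫_ℂ * ⟪b, p.2⟫_ℂ -
          ⟪a, p.1⟫_ℂ * ⟪p.2, b⟫_ℂ + ⟪a, a⟫_ℂ * ⟪b, b⟫_ℂ)) := by
      intro p
      rw [@norm_eq_sqrt_re_inner ℂ]
      congr 2
      rw [inner_sub_sub_self, hJinner, hJinner, hJinner, hJinner]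
    simp only [key]
    have hcont : Continuous fun p : H × H =>
        Real.sqrt (RCLike.re (⟪p.1, p.1⟫_ℂ * ⟪p.2, p.2⟫_ℂ - ⟪p.1, a⟫_ℂ * ⟪b, p.2⟫_ℂ -
          ⟪a, p.1⟫_ℂ * ⟪p.2, b⟫_ℂ + ⟪a, a⟫_ℂ * ⟪b, b⟫_ℂ)) := by
      have c11 : Continuous fun p : H × H => ⟪p.1, p.1⟫_ℂ :=
        continuous_inner.comp (continuous_fst.prodMk continuous_fst)
      have c22 : Continuous fun p : H × H => ⟪p.2, p.2⟫_ℂ :=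
        continuous_inner.comp (continuous_snd.prodMk continuous_snd)
      have c1a : Continuous fun p : H × H => ⟪p.1, a⟫_ℂ :=
        continuous_inner.comp (continuous_fst.prodMk continuous_const)
      have cb2 : Continuous fun p : H × H => ⟪b, p.2⟫_ℂ :=
        continuous_inner.comp (continuous_const.prodMk continuous_snd)
      have ca1 : Continuous fun p : H × H => ⟪a, p.1⟫_ℂ :=
        continuous_inner.comp (continuous_const.prodMk continuous_fst)
      have c2b : Continuous fun p : H × H => ⟪p.2, b⟫_ℂ :=
        continuous_inner.comp (continuous_snd.prodMk continuous_const)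
      exact Real.continuous_sqrt.comp (RCLike.continuous_re.comp
        ((((c11.mul c22).sub (c1a.mul cb2)).sub (ca1.mul c2b)).add continuous_const))
    have h0 := hcont.tendsto (a, b)
    simpa using h0
  -- strong continuity of σ
  have hσc : ∀ κ : K, Continuous fun x : G => σ x κ := by
    have hspan : ∀ κ ∈ Submodule.span ℂ (Set.range fun p : H × H => J p.1 p.2),
        Continuous fun x : G => σ x κ := by
      intro κ hκ
      induction hκ using Submodule.span_induction with
      | mem y hy =>
        obtain ⟨⟨a, b⟩, rfl⟩ := hy
        simp only [hσJ]
        exact hJcont.comp ((hπc a).prodMk (hπc b))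
      | zero => simpa using continuous_const
      | add u v _ _ hu hv => simpa only [map_add, Pi.add_def] using hu.add hv
      | smul c u _ hu => simpa only [map_smul, Pi.smul_def] using hu.const_smul c
    intro κ
    have hdense : Dense ((Submodule.span ℂ (Set.range fun p : H × H => J p.1 p.2) :
        Submodule ℂ K) : Set K) :=
      Submodule.dense_iff_topologicalClosure_eq_top.mpr hJtotal
    obtain ⟨u, humem, hulim⟩ := mem_closure_iff_seq_limit.mp (hdense κ)
    have hunif : TendstoUniformly (fun m x => σ x (u m)) (fun x => σ x κ) Filter.atTop := by
      rw [Metric.tendstoUniformly_iff]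
      intro ε hε
      have hn : Filter.Tendsto (fun m => ‖u m - κ‖) Filter.atTop (nhds 0) := by
        rw [← tendsto_iff_norm_sub_tendsto_zero]
        exact hulim
      filter_upwards [hn.eventually (gt_mem_nhds hε)] with m hm x
      rw [dist_eq_norm]
      calc ‖σ x κ - σ x (u m)‖ = ‖σ x (κ - u m)‖ := by rw [map_sub]
        _ = ‖κ - u m‖ := hσnorm x _
        _ = ‖u m - κ‖ := by rw [norm_sub_rev]
        _ < ε := hm
    exact hunif.continuous (Filter.Eventually.of_forall fun m => hspan _ (humem m)).frequently
  -- integrability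
  have hπint : ∀ (ζ η : H), Integrable (fun x => ⟪π x ζ, η⟫_ℂ) μ := by
    intro ζ η
    have hc : Continuous fun x : G => ⟪π x ζ, η⟫_ℂ :=
      continuous_inner.comp ((hπc ζ).prodMk continuous_const)
    refine ⟨hc.aestronglyMeasurable, ?_⟩
    apply HasFiniteIntegral.of_bounded (C := ‖ζ‖ * ‖η‖)
    filter_upwards with x
    calc ‖⟪π x ζ, η⟫_ℂ‖ ≤ ‖π x ζ‖ * ‖η‖ := norm_inner_le_norm _ _
      _ = ‖ζ‖ * ‖η‖ := by rw [hπnorm]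
  have hπint2 : ∀ (ζ η : H), Integrable (fun x => ‖⟪π x ζ, η⟫_ℂ‖ ^ 2) μ := by
    intro ζ η
    have hc : Continuous fun x : G => ‖⟪π x ζ, η⟫_ℂ‖ ^ 2 :=
      ((continuous_inner.comp ((hπc ζ).prodMk continuous_const)).norm).pow 2
    refine ⟨hc.aestronglyMeasurable, ?_⟩
    apply HasFiniteIntegral.of_bounded (C := (‖ζ‖ * ‖η‖) ^ 2)
    filter_upwards with x
    have h1 : ‖⟪π x ζ, η⟫_ℂ‖ ≤ ‖ζ‖ * ‖η‖ := by
      calc ‖⟪π x ζ, η⟫_ℂ‖ ≤ ‖π x ζ‖ * ‖η‖ := norm_inner_le_norm _ _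
        _ = ‖ζ‖ * ‖η‖ := by rw [hπnorm]
    rw [Real.norm_eq_abs, abs_of_nonneg (by positivity)]
    exact pow_le_pow_left₀ (norm_nonneg _) h1 2
  have hσint : ∀ (κ κ' : K), Integrable (fun x => ⟪σ x κ, κ'⟫_ℂ) μ := by
    intro κ κ'
    have hc : Continuous fun x : G => ⟪σ x κ, κ'⟫_ℂ :=
      continuous_inner.comp ((hσc κ).prodMk continuous_const)
    refine ⟨hc.aestronglyMeasurable, ?_⟩
    apply HasFiniteIntegral.of_bounded (C := ‖κ‖ * ‖κ'‖)
    filter_upwards with x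
    calc ‖⟪σ x κ, κ'⟫_ℂ‖ ≤ ‖σ x κ‖ * ‖κ'‖ := norm_inner_le_norm _ _
      _ = ‖κ‖ * ‖κ'‖ := by rw [hσnorm]
  -- key induction
  have key : ∀ n : ℕ, ∀ ξ η : H,
      ‖⟪(A ^ n) ξ, η⟫_ℂ‖ ^ 2 ≤ RCLike.re ⟪(B ^ n) (J ξ ξ), J η η⟫_ℂ := by
    intro n
    induction n with
    | zero =>
      intro ξ η
      simp only [pow_zero, ContinuousLinearMap.one_apply]
      rw [hJinner]
      have h1 : ⟪ξ, η⟫_ℂ * ⟪η, ξ⟫_ℂ = ((‖⟪ξ, η⟫_ℂ‖ ^ 2 : ℝ) : ℂ) := by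
        rw [← inner_conj_symm η ξ, RCLike.mul_conj]
        norm_cast
      rw [h1]
      simp only [RCLike.re_to_complex, Complex.ofReal_re]
      exact le_rfl
    | succ n ih =>
      intro ξ η
      set ζ := (A ^ n) ξ with hζ
      set κ := (B ^ n) (J ξ ξ) with hκ
      have hpt : ∀ x : G, ‖⟪π x ζ, η⟫_ℂ‖ ^ 2 ≤ RCLike.re ⟪σ x κ, J η η⟫_ℂ := by
        intro x
        have h1 : ⟪π x ζ, η⟫_ℂ = ⟪ζ, star (π x) η⟫_ℂ := hinner_starH _ _ _
        have h2 := ih ξ (star (π x) η)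
        rw [h1]
        refine h2.trans (le_of_eq ?_)
        rw [hJstar x η, ← hinner_starK (σ x) κ (J η η)]
      have hAeq : ⟪(A ^ (n + 1)) ξ, η⟫_ℂ = ∫ x, ⟪π x ζ, η⟫_ℂ ∂μ := by
        have hpow : (A ^ (n + 1)) ξ = A ζ := by rw [pow_succ']; rfl
        rw [hpow, hA]
      have hBeq : RCLike.re ⟪(B ^ (n + 1)) (J ξ ξ), J η η⟫_ℂ =
          ∫ x, RCLike.re ⟪σ x κ, J η η⟫_ℂ ∂μ := by
        have hpow : (B ^ (n + 1)) (J ξ ξ) = B κ := by rw [pow_succ']; rfl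
        rw [hpow, hB, integral_re (hσint κ (J η η))]
      rw [hAeq, hBeq]
      have hre_int : Integrable (fun x => RCLike.re ⟪σ x κ, J η η⟫_ℂ) μ :=
        (hσint κ (J η η)).re
      calc ‖∫ x, ⟪π x ζ, η⟫_ℂ ∂μ‖ ^ 2 ≤ (∫ x, ‖⟪π x ζ, η⟫_ℂ‖ ∂μ) ^ 2 := by
            apply pow_le_pow_left₀ (norm_nonneg _) (norm_integral_le_integral_norm _)
        _ ≤ ∫ x, ‖⟪π x ζ, η⟫_ℂ‖ ^ 2 ∂μ :=
            aux_sq_integral_le μ (hπint ζ η).norm (hπint2 ζ η)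
        _ ≤ ∫ x, RCLike.re ⟪σ x κ, J η η⟫_ℂ ∂μ :=
            integral_mono (hπint2 ζ η) hre_int hpt
  -- norm bound
  have hnorm : ∀ n : ℕ, ‖A ^ n‖ ≤ Real.sqrt ‖B ^ n‖ := by
    intro n
    apply ContinuousLinearMap.opNorm_le_bound _ (Real.sqrt_nonneg _)
    intro ξ
    have h := key n ξ ((A ^ n) ξ)
    have h1 : ‖⟪(A ^ n) ξ, (A ^ n) ξ⟫_ℂ‖ = ‖(A ^ n) ξ‖ ^ 2 := by
      rw [inner_self_eq_norm_sq_to_K]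
      simp [norm_pow]
    have h2 : RCLike.re ⟪(B ^ n) (J ξ ξ), J ((A ^ n) ξ) ((A ^ n) ξ)⟫_ℂ ≤
        ‖B ^ n‖ * (‖ξ‖ ^ 2 * ‖(A ^ n) ξ‖ ^ 2) := by
      calc RCLike.re ⟪(B ^ n) (J ξ ξ), J ((A ^ n) ξ) ((A ^ n) ξ)⟫_ℂ ≤
            ‖⟪(B ^ n) (J ξ ξ), J ((A ^ n) ξ) ((A ^ n) ξ)⟫_ℂ‖ := RCLike.re_le_norm _
        _ ≤ ‖(B ^ n) (J ξ ξ)‖ * ‖J ((A ^ n) ξ) ((A ^ n) ξ)‖ := norm_inner_le_norm _ _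
        _ ≤ (‖B ^ n‖ * ‖J ξ ξ‖) * ‖J ((A ^ n) ξ) ((A ^ n) ξ)‖ := by
            apply mul_le_mul_of_nonneg_right ((B ^ n).le_opNorm _) (norm_nonneg _)
        _ = ‖B ^ n‖ * (‖ξ‖ ^ 2 * ‖(A ^ n) ξ‖ ^ 2) := by
            rw [hJnorm, hJnorm]; ring
    have h3 : ‖(A ^ n) ξ‖ ^ 2 ≤ ‖B ^ n‖ * ‖ξ‖ ^ 2 := by
      rcases eq_or_lt_of_le (norm_nonneg ((A ^ n) ξ)) with hz | hz
      · rw [← hz]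
        norm_num
        positivity
      · rw [h1] at h
        nlinarith [h, h2, hz, mul_pos hz hz]
    calc ‖(A ^ n) ξ‖ = Real.sqrt (‖(A ^ n) ξ‖ ^ 2) := (Real.sqrt_sq (norm_nonneg _)).symm
      _ ≤ Real.sqrt (‖B ^ n‖ * ‖ξ‖ ^ 2) := Real.sqrt_le_sqrt h3
      _ = Real.sqrt ‖B ^ n‖ * ‖ξ‖ := by
          rw [Real.sqrt_mul (norm_nonneg _), Real.sqrt_sq (norm_nonneg _)]
  -- pass to ℝ≥0∞
  have hAB : ∀ n : ℕ, (‖A ^ n‖₊ : ENNReal) ≤ (‖B ^ n‖₊ : ENNReal) ^ (1 / 2 : ℝ) := by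
    intro n
    have h1 : ‖A ^ n‖₊ ≤ ‖B ^ n‖₊ ^ (1 / 2 : ℝ) := by
      rw [← NNReal.coe_le_coe, NNReal.coe_rpow, coe_nnnorm, coe_nnnorm,
        ← Real.sqrt_eq_rpow]
      exact hnorm n
    calc (‖A ^ n‖₊ : ENNReal) ≤ ((‖B ^ n‖₊ ^ (1 / 2 : ℝ) : NNReal) : ENNReal) := by
          exact_mod_cast h1
      _ = (‖B ^ n‖₊ : ENNReal) ^ (1 / 2 : ℝ) :=
          ENNReal.coe_rpow_of_nonneg _ (by norm_num)
  -- Gelfand's formula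
  have hta := spectrum.pow_nnnorm_pow_one_div_tendsto_nhds_spectralRadius A
  have htb := spectrum.pow_nnnorm_pow_one_div_tendsto_nhds_spectralRadius B
  have htb' : Filter.Tendsto
      (fun n : ℕ => ((‖B ^ n‖₊ : ENNReal) ^ (1 / (n : ℝ))) ^ (1 / 2 : ℝ))
      Filter.atTop (nhds (spectralRadius ℂ B ^ (1 / 2 : ℝ))) :=
    (ENNReal.continuous_rpow_const.tendsto _).comp htb
  refine le_of_tendsto_of_tendsto' hta htb' ?_
  intro n
  calc (‖A ^ n‖₊ : ENNReal) ^ (1 / (n : ℝ)) ≤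
        ((‖B ^ n‖₊ : ENNReal) ^ (1 / 2 : ℝ)) ^ (1 / (n : ℝ)) :=
        ENNReal.rpow_le_rpow (hAB n) (by positivity)
    _ = ((‖B ^ n‖₊ : ENNReal) ^ (1 / (n : ℝ))) ^ (1 / 2 : ℝ) := by
        rw [← ENNReal.rpow_mul, ← ENNReal.rpow_mul, mul_comm]
end

section
/- Let G be a locally compact group, μ a probability measure on G, π a unitary representation, and suppose (Tₙ) is a sequence of Hilbert–Schmidt operators with ‖Tₙ‖₂ = 1 such that ∫_G ⟨π(x)Tₙπ(x)⁻¹, Tₙ⟩ dμ(x) → 1. Then the set D of x ∈ G for which ‖π(x)Tₙπ(x)⁻¹ − Tₙ‖₂ → 0 along a suitable subsequence is a subgroup of G of full μ-measure. -/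
open MeasureTheory ContinuousLinearMap Filter Topology
open scoped InnerProductSpace

/-- The Hilbert–Schmidt inner product `⟨S, T⟩ = Trace (T* S)` with respect to a Hilbert
basis `e`. -/
noncomputable def hsInner {H : Type*} [NormedAddCommGroup H] [InnerProductSpace ℂ H]
    {ι : Type*} (e : HilbertBasis ι ℂ H) (S T : H →L[ℂ] H) : ℂ :=
  ∑' i, ⟪T (e i), S (e i)⟫_ℂ

section Helpers

open scoped NNReal ENNReal

variable {H ι : Type*} [NormedAddCommGroup H] [InnerProductSpace ℂ H] [CompleteSpace H]
  (e : HilbertBasis ι ℂ H)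

/-- ENNReal-valued Hilbert–Schmidt squared norm with respect to `e`. -/
noncomputable def gE (S : H →L[ℂ] H) : ℝ≥0∞ := ∑' i, ((‖S (e i)‖₊ ^ 2 : ℝ≥0) : ℝ≥0∞)

lemma hasSum_parseval (v : H) :
    HasSum (fun i => ‖⟪e i, v⟫_ℂ‖ ^ 2) (‖v‖ ^ 2) := by
  have h := e.hasSum_inner_mul_inner v v
  have h2 : ∀ i, ⟪v, e i⟫_ℂ * ⟪e i, v⟫_ℂ = ((‖⟪e i, v⟫_ℂ‖ ^ 2 : ℝ) : ℂ) := fun i => by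
    rw [← inner_conj_symm]
    simpa using RCLike.conj_mul (⟪e i, v⟫_ℂ)
  rw [inner_self_eq_norm_sq_to_K] at h
  simp only [h2] at h
  have h3 : HasSum (fun i => ((‖⟪e i, v⟫_ℂ‖ ^ 2 : ℝ) : ℂ)) ((‖v‖ ^ 2 : ℝ) : ℂ) := by
    convert h using 2
    all_goals norm_cast
  exact Complex.hasSum_ofReal.mp h3

lemma parsevalE (v : H) :
    ∑' j, ((‖⟪e j, v⟫_ℂ‖₊ ^ 2 : ℝ≥0) : ℝ≥0∞) = ((‖v‖₊ ^ 2 : ℝ≥0) : ℝ≥0∞) := by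
  have h : HasSum (fun j => (‖⟪e j, v⟫_ℂ‖₊ ^ 2 : ℝ≥0)) (‖v‖₊ ^ 2) := by
    rw [← NNReal.hasSum_coe]
    simpa using hasSum_parseval e v
  rw [← h.tsum_eq, ENNReal.coe_tsum h.summable]

lemma gE_adjoint (S : H →L[ℂ] H) : gE e (adjoint S) = gE e S := by
  have key : ∀ T : H →L[ℂ] H,
      gE e T = ∑' (j : ι) (i : ι), ((‖⟪e j, T (e i)⟫_ℂ‖₊ ^ 2 : ℝ≥0) : ℝ≥0∞) := by
    intro T
    rw [gE, ENNReal.tsum_comm]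
    exact tsum_congr fun i => (parsevalE e (T (e i))).symm
  rw [key S, gE]
  refine tsum_congr fun j => ?_
  rw [← parsevalE e (adjoint S (e j))]
  refine tsum_congr fun i => ?_
  have : ‖⟪e i, (adjoint S) (e j)⟫_ℂ‖₊ = ‖⟪e j, S (e i)⟫_ℂ‖₊ :=
    NNReal.eq (by
      simp only [coe_nnnorm]
      rw [norm_inner_symm, ContinuousLinearMap.adjoint_inner_left])
  rw [this]

lemma gE_comp_left {U : H →L[ℂ] H} (hU : U ∈ unitary (H →L[ℂ] H)) (S : H →L[ℂ] H) :
    gE e (U ∘L S) = gE e S :=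
  tsum_congr fun i => by
    have : ‖U (S (e i))‖₊ = ‖S (e i)‖₊ := NNReal.eq (U.norm_map_of_mem_unitary hU _)
    simp [this]

lemma gE_comp_right {U : H →L[ℂ] H} (hU : U ∈ unitary (H →L[ℂ] H)) (S : H →L[ℂ] H) :
    gE e (S ∘L U) = gE e S := by
  have hU' : adjoint U ∈ unitary (H →L[ℂ] H) := by
    rw [← ContinuousLinearMap.star_eq_adjoint]
    exact Unitary.star_mem hU
  rw [← gE_adjoint e (S ∘L U), ContinuousLinearMap.adjoint_comp,
    gE_comp_left e hU', gE_adjoint]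

lemma gE_conj {U : H →L[ℂ] H} (hU : U ∈ unitary (H →L[ℂ] H)) (S : H →L[ℂ] H) :
    gE e (U ∘L S ∘L adjoint U) = gE e S := by
  have hU' : adjoint U ∈ unitary (H →L[ℂ] H) := by
    rw [← ContinuousLinearMap.star_eq_adjoint]
    exact Unitary.star_mem hU
  rw [gE_comp_left e hU, gE_comp_right e hU']

lemma summable_sq_iff (S : H →L[ℂ] H) :
    (Summable fun i => ‖S (e i)‖ ^ 2) ↔ gE e S ≠ ⊤ := by
  rw [gE, ENNReal.tsum_coe_ne_top_iff_summable, ← NNReal.summable_coe]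
  simp [NNReal.coe_pow]

lemma tsum_sq_eq (S : H →L[ℂ] H) :
    ∑' i, ‖S (e i)‖ ^ 2 = (gE e S).toReal := by
  by_cases h : Summable fun i => ‖S (e i)‖ ^ 2
  · have h' : Summable fun i => (‖S (e i)‖₊ ^ 2 : ℝ≥0) := by
      rw [← NNReal.summable_coe]; simpa [NNReal.coe_pow] using h
    rw [gE, ← ENNReal.coe_tsum h', ENNReal.coe_toReal, NNReal.coe_tsum]
    simp [NNReal.coe_pow]
  · have htop : gE e S = ⊤ := by
      by_contra h'
      exact h ((summable_sq_iff e S).mpr h')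
    rw [tsum_eq_zero_of_not_summable h, htop, ENNReal.toReal_top]

lemma tsum_sq_congr {S T : H →L[ℂ] H} (h : gE e S = gE e T) :
    ∑' i, ‖S (e i)‖ ^ 2 = ∑' i, ‖T (e i)‖ ^ 2 := by
  rw [tsum_sq_eq, tsum_sq_eq, h]

lemma gE_eq_one (S : H →L[ℂ] H)
    (h1 : ∑' i, ‖S (e i)‖ ^ 2 = 1) : gE e S = 1 := by
  rw [← ENNReal.toReal_eq_one_iff, ← tsum_sq_eq, h1]

lemma nnnorm_sq_add_le (x y : H) :
    (‖x + y‖₊ ^ 2 : ℝ≥0) ≤ 2 * ‖x‖₊ ^ 2 + 2 * ‖y‖₊ ^ 2 := by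
  rw [← NNReal.coe_le_coe]
  push_cast
  nlinarith [norm_add_le x y, norm_nonneg (x + y), norm_nonneg x, norm_nonneg y,
    sq_nonneg (‖x‖ - ‖y‖), mul_self_le_mul_self (norm_nonneg (x + y)) (norm_add_le x y)]

lemma gE_add_le (S T : H →L[ℂ] H) : gE e (S + T) ≤ 2 * gE e S + 2 * gE e T := by
  rw [gE, gE, gE, ← ENNReal.tsum_mul_left, ← ENNReal.tsum_mul_left, ← ENNReal.tsum_add]
  refine ENNReal.tsum_le_tsum fun i => ?_
  have h := nnnorm_sq_add_le (S (e i)) (T (e i))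
  calc ((‖(S + T) (e i)‖₊ ^ 2 : ℝ≥0) : ℝ≥0∞)
      = ((‖S (e i) + T (e i)‖₊ ^ 2 : ℝ≥0) : ℝ≥0∞) := by rw [ContinuousLinearMap.add_apply]
    _ ≤ ((2 * ‖S (e i)‖₊ ^ 2 + 2 * ‖T (e i)‖₊ ^ 2 : ℝ≥0) : ℝ≥0∞) := ENNReal.coe_le_coe.mpr h
    _ = 2 * ((‖S (e i)‖₊ ^ 2 : ℝ≥0) : ℝ≥0∞) + 2 * ((‖T (e i)‖₊ ^ 2 : ℝ≥0) : ℝ≥0∞) := by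
        push_cast; ring

lemma gE_sub_le (S T : H →L[ℂ] H) : gE e (S - T) ≤ 2 * gE e S + 2 * gE e T := by
  have h := gE_add_le e S (-T)
  have hT : gE e (-T) = gE e T := tsum_congr fun i => by simp
  rw [hT] at h
  simpa [sub_eq_add_neg] using h

lemma key_expand (S T : H →L[ℂ] H)
    (hS : Summable fun i => ‖S (e i)‖ ^ 2) (hT : Summable fun i => ‖T (e i)‖ ^ 2)
    (hS1 : ∑' i, ‖S (e i)‖ ^ 2 = 1) (hT1 : ∑' i, ‖T (e i)‖ ^ 2 = 1) :
    ∑' i, ‖(S - T) (e i)‖ ^ 2 = 2 - 2 * (hsInner e S T).re := by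
  have hk : Summable fun i => ⟪T (e i), S (e i)⟫_ℂ := by
    refine Summable.of_norm (Summable.of_nonneg_of_le (fun i => norm_nonneg _)
      (fun i => ?_) (((hS.add hT).div_const 2)))
    calc ‖⟪T (e i), S (e i)⟫_ℂ‖ ≤ ‖T (e i)‖ * ‖S (e i)‖ := norm_inner_le_norm _ _
      _ ≤ (‖S (e i)‖ ^ 2 + ‖T (e i)‖ ^ 2) / 2 := by nlinarith [sq_nonneg (‖S (e i)‖ - ‖T (e i)‖)]
  have hre : HasSum (fun i => (⟪T (e i), S (e i)⟫_ℂ).re) ((hsInner e S T).re) := by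
    have := hk.hasSum.mapL Complex.reCLM
    simpa [hsInner] using this
  have h1 : HasSum (fun i => ‖S (e i)‖ ^ 2) 1 := hS1 ▸ hS.hasSum
  have h2 : HasSum (fun i => ‖T (e i)‖ ^ 2) 1 := hT1 ▸ hT.hasSum
  have h3 := (h1.sub (hre.mul_left 2)).add h2
  have h4 : (fun i => ‖S (e i)‖ ^ 2 - 2 * (⟪T (e i), S (e i)⟫_ℂ).re + ‖T (e i)‖ ^ 2)
      = fun i => ‖(S - T) (e i)‖ ^ 2 := by
    funext i
    rw [ContinuousLinearMap.sub_apply, @norm_sub_sq ℂ]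
    have : RCLike.re ⟪S (e i), T (e i)⟫_ℂ = (⟪T (e i), S (e i)⟫_ℂ).re := by
      rw [inner_re_symm]; rfl
    rw [this]
  rw [h4] at h3
  rw [h3.tsum_eq]
  ring

end Helpers

set_option maxHeartbeats 1000000 in
/-- Suppose `(Tₙ)` are Hilbert–Schmidt operators with `‖Tₙ‖₂ = 1` and (after passing to a
subsequence) `⟨π(x) Tₙ π(x)⁻¹, Tₙ⟩ → 1` for `μ`-almost every `x`. Then the set
`D = {x : ‖π(x) Tₙ π(x)⁻¹ − Tₙ‖₂ → 0}` is a subgroup of `G` of full `μ`-measure. -/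
theorem convergence_set_is_full_measure_subgroup
    {G H ι : Type*} [Group G] [TopologicalSpace G] [IsTopologicalGroup G]
    [MeasurableSpace G] [BorelSpace G]
    [NormedAddCommGroup H] [InnerProductSpace ℂ H] [CompleteSpace H]
    (μ : Measure G) [IsProbabilityMeasure μ]
    (e : HilbertBasis ι ℂ H)
    (π : G → H →L[ℂ] H) (hπu : ∀ g, π g ∈ unitary (H →L[ℂ] H))
    (hπ1 : π 1 = 1) (hπm : ∀ g h, π (g * h) = π g ∘L π h)
    (Tn : ℕ → H →L[ℂ] H)
    (hsum : ∀ n, Summable fun i => ‖Tn n (e i)‖ ^ 2)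
    (hnorm : ∀ n, ∑' i, ‖Tn n (e i)‖ ^ 2 = 1)
    (hae : ∀ᵐ x ∂μ,
      Tendsto (fun n => hsInner e (π x ∘L Tn n ∘L adjoint (π x)) (Tn n)) atTop (𝓝 1)) :
    (1 : G) ∈
        {x : G | Tendsto
          (fun n => ∑' i, ‖(π x ∘L Tn n ∘L adjoint (π x) - Tn n) (e i)‖ ^ 2)
          atTop (𝓝 0)} ∧
      (∀ x ∈ {x : G | Tendsto
          (fun n => ∑' i, ‖(π x ∘L Tn n ∘L adjoint (π x) - Tn n) (e i)‖ ^ 2)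
          atTop (𝓝 0)}, x⁻¹ ∈ {x : G | Tendsto
          (fun n => ∑' i, ‖(π x ∘L Tn n ∘L adjoint (π x) - Tn n) (e i)‖ ^ 2)
          atTop (𝓝 0)}) ∧
      (∀ x y, x ∈ {x : G | Tendsto
          (fun n => ∑' i, ‖(π x ∘L Tn n ∘L adjoint (π x) - Tn n) (e i)‖ ^ 2)
          atTop (𝓝 0)} → y ∈ {x : G | Tendsto
          (fun n => ∑' i, ‖(π x ∘L Tn n ∘L adjoint (π x) - Tn n) (e i)‖ ^ 2)
          atTop (𝓝 0)} → x * y ∈ {x : G | Tendsto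
          (fun n => ∑' i, ‖(π x ∘L Tn n ∘L adjoint (π x) - Tn n) (e i)‖ ^ 2)
          atTop (𝓝 0)}) ∧
      μ ({x : G | Tendsto
          (fun n => ∑' i, ‖(π x ∘L Tn n ∘L adjoint (π x) - Tn n) (e i)‖ ^ 2)
          atTop (𝓝 0)}ᶜ) = 0 := by
  -- basic facts
  have hadj_mem : ∀ x : G, adjoint (π x) ∈ unitary (H →L[ℂ] H) := fun x => by
    rw [← ContinuousLinearMap.star_eq_adjoint]
    exact Unitary.star_mem (hπu x)
  have hgTn : ∀ n, gE e (Tn n) = 1 := fun n => gE_eq_one e _ (hnorm n)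
  have hgA : ∀ (x : G) (n : ℕ), gE e (π x ∘L Tn n ∘L adjoint (π x)) = 1 := fun x n =>
    (gE_conj e (hπu x) (Tn n)).trans (hgTn n)
  have hAsum : ∀ (x : G) (n : ℕ),
      Summable fun i => ‖(π x ∘L Tn n ∘L adjoint (π x)) (e i)‖ ^ 2 := fun x n =>
    (summable_sq_iff e _).mpr (by rw [hgA]; exact ENNReal.one_ne_top)
  have hA1 : ∀ (x : G) (n : ℕ),
      ∑' i, ‖(π x ∘L Tn n ∘L adjoint (π x)) (e i)‖ ^ 2 = 1 := fun x n => by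
    rw [tsum_sq_eq, hgA]; simp
  have hgAB_ne : ∀ (x : G) (n : ℕ),
      gE e (π x ∘L Tn n ∘L adjoint (π x) - Tn n) ≠ ⊤ := fun x n => by
    refine ne_top_of_le_ne_top ?_ (gE_sub_le e _ _)
    rw [hgA, hgTn]
    simp
  -- the inverse of π x
  have hπinv : ∀ x : G, π x⁻¹ = adjoint (π x) := by
    intro x
    have ha1 : adjoint (π x) * π x = 1 := by
      rw [← ContinuousLinearMap.star_eq_adjoint]
      exact (hπu x).1
    have h1 : π x * π x⁻¹ = 1 := by
      rw [ContinuousLinearMap.mul_def, ← hπm, mul_inv_cancel, hπ1]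
    calc π x⁻¹ = 1 * π x⁻¹ := (one_mul _).symm
      _ = (adjoint (π x) * π x) * π x⁻¹ := by rw [ha1]
      _ = adjoint (π x) * (π x * π x⁻¹) := by rw [mul_assoc]
      _ = adjoint (π x) := by rw [h1, mul_one]
  -- part 1 : identity
  have part1 : Tendsto
      (fun n => ∑' i, ‖(π (1 : G) ∘L Tn n ∘L adjoint (π 1) - Tn n) (e i)‖ ^ 2)
      atTop (𝓝 0) := by
    have hzero : ∀ n, π (1 : G) ∘L Tn n ∘L adjoint (π 1) - Tn n = 0 := fun n => by
      have ha : adjoint (1 : H →L[ℂ] H) = 1 := by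
        rw [← ContinuousLinearMap.star_eq_adjoint, star_one]
      ext v
      simp [hπ1, ha]
    simp only [hzero]
    simpa using (tendsto_const_nhds :
      Tendsto (fun _ : ℕ => (0 : ℝ)) atTop (𝓝 0))
  -- part 2 : inverses
  have part2 : ∀ x : G,
      Tendsto (fun n => ∑' i, ‖(π x ∘L Tn n ∘L adjoint (π x) - Tn n) (e i)‖ ^ 2)
        atTop (𝓝 0) →
      Tendsto (fun n => ∑' i, ‖(π x⁻¹ ∘L Tn n ∘L adjoint (π x⁻¹) - Tn n) (e i)‖ ^ 2)
        atTop (𝓝 0) := by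
    intro x hx
    have ha1 : ∀ v : H, adjoint (π x) (π x v) = v := by
      intro v
      have h : adjoint (π x) * π x = 1 := by
        rw [← ContinuousLinearMap.star_eq_adjoint]; exact (hπu x).1
      have := DFunLike.congr_fun h v
      simpa using this
    have ha2 : ∀ v : H, π x (adjoint (π x) v) = v := by
      intro v
      have h : π x * adjoint (π x) = 1 := by
        rw [← ContinuousLinearMap.star_eq_adjoint]; exact (hπu x).2
      have := DFunLike.congr_fun h v
      simpa using this
    have heq : ∀ n, ∑' i, ‖(π x⁻¹ ∘L Tn n ∘L adjoint (π x⁻¹) - Tn n) (e i)‖ ^ 2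
        = ∑' i, ‖(π x ∘L Tn n ∘L adjoint (π x) - Tn n) (e i)‖ ^ 2 := by
      intro n
      have hop : adjoint (π x) ∘L (π x ∘L Tn n ∘L adjoint (π x) - Tn n) ∘L
          adjoint (adjoint (π x))
          = -(π x⁻¹ ∘L Tn n ∘L adjoint (π x⁻¹) - Tn n) := by
        ext v
        simp [hπinv x, ContinuousLinearMap.adjoint_adjoint, map_sub, ha1, ha2]
      have hg : gE e (π x⁻¹ ∘L Tn n ∘L adjoint (π x⁻¹) - Tn n)
          = gE e (π x ∘L Tn n ∘L adjoint (π x) - Tn n) := by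
        have hneg : gE e (π x⁻¹ ∘L Tn n ∘L adjoint (π x⁻¹) - Tn n)
            = gE e (-(π x⁻¹ ∘L Tn n ∘L adjoint (π x⁻¹) - Tn n)) :=
          tsum_congr fun i => by rw [ContinuousLinearMap.neg_apply, nnnorm_neg]
        rw [hneg, ← hop]
        exact gE_conj e (hadj_mem x) _
      exact tsum_sq_congr e hg
    simp only [heq]
    exact hx
  -- part 3 : products
  have part3 : ∀ x y : G,
      Tendsto (fun n => ∑' i, ‖(π x ∘L Tn n ∘L adjoint (π x) - Tn n) (e i)‖ ^ 2)
        atTop (𝓝 0) →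
      Tendsto (fun n => ∑' i, ‖(π y ∘L Tn n ∘L adjoint (π y) - Tn n) (e i)‖ ^ 2)
        atTop (𝓝 0) →
      Tendsto (fun n => ∑' i, ‖(π (x * y) ∘L Tn n ∘L adjoint (π (x * y)) - Tn n) (e i)‖ ^ 2)
        atTop (𝓝 0) := by
    intro x y hx hy
    have hop : ∀ n, π (x * y) ∘L Tn n ∘L adjoint (π (x * y)) - Tn n
        = (π x ∘L (π y ∘L Tn n ∘L adjoint (π y) - Tn n) ∘L adjoint (π x))
          + (π x ∘L Tn n ∘L adjoint (π x) - Tn n) := by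
      intro n
      ext v
      simp [hπm x y, ContinuousLinearMap.adjoint_comp, map_sub]
    have hbound : ∀ n,
        ∑' i, ‖(π (x * y) ∘L Tn n ∘L adjoint (π (x * y)) - Tn n) (e i)‖ ^ 2
        ≤ 2 * (∑' i, ‖(π y ∘L Tn n ∘L adjoint (π y) - Tn n) (e i)‖ ^ 2)
          + 2 * (∑' i, ‖(π x ∘L Tn n ∘L adjoint (π x) - Tn n) (e i)‖ ^ 2) := by
      intro n
      have hC : gE e (π x ∘L (π y ∘L Tn n ∘L adjoint (π y) - Tn n) ∘L adjoint (π x))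
          = gE e (π y ∘L Tn n ∘L adjoint (π y) - Tn n) := gE_conj e (hπu x) _
      have h1 : gE e (π (x * y) ∘L Tn n ∘L adjoint (π (x * y)) - Tn n)
          ≤ 2 * gE e (π y ∘L Tn n ∘L adjoint (π y) - Tn n)
            + 2 * gE e (π x ∘L Tn n ∘L adjoint (π x) - Tn n) := by
        rw [hop n]
        calc gE e _ ≤ 2 * gE e (π x ∘L (π y ∘L Tn n ∘L adjoint (π y) - Tn n) ∘L adjoint (π x))
              + 2 * gE e (π x ∘L Tn n ∘L adjoint (π x) - Tn n) := gE_add_le e _ _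
          _ = _ := by rw [hC]
      have hfin : 2 * gE e (π y ∘L Tn n ∘L adjoint (π y) - Tn n)
          + 2 * gE e (π x ∘L Tn n ∘L adjoint (π x) - Tn n) ≠ ⊤ := by
        apply ENNReal.add_ne_top.mpr
        constructor <;> exact ENNReal.mul_ne_top (by simp) (hgAB_ne _ n)
      calc ∑' i, ‖(π (x * y) ∘L Tn n ∘L adjoint (π (x * y)) - Tn n) (e i)‖ ^ 2
          = (gE e (π (x * y) ∘L Tn n ∘L adjoint (π (x * y)) - Tn n)).toReal :=
            tsum_sq_eq e _
        _ ≤ (2 * gE e (π y ∘L Tn n ∘L adjoint (π y) - Tn n)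
            + 2 * gE e (π x ∘L Tn n ∘L adjoint (π x) - Tn n)).toReal :=
            ENNReal.toReal_mono hfin h1
        _ = 2 * (∑' i, ‖(π y ∘L Tn n ∘L adjoint (π y) - Tn n) (e i)‖ ^ 2)
            + 2 * (∑' i, ‖(π x ∘L Tn n ∘L adjoint (π x) - Tn n) (e i)‖ ^ 2) := by
            rw [ENNReal.toReal_add (ENNReal.mul_ne_top (by simp) (hgAB_ne y n))
              (ENNReal.mul_ne_top (by simp) (hgAB_ne x n)),
              ENNReal.toReal_mul, ENNReal.toReal_mul, tsum_sq_eq e, tsum_sq_eq e]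
            norm_num
    have hupper : Tendsto
        (fun n => 2 * (∑' i, ‖(π y ∘L Tn n ∘L adjoint (π y) - Tn n) (e i)‖ ^ 2)
          + 2 * (∑' i, ‖(π x ∘L Tn n ∘L adjoint (π x) - Tn n) (e i)‖ ^ 2))
        atTop (𝓝 0) := by
      have := (hy.const_mul 2).add (hx.const_mul 2)
      simpa using this
    refine tendsto_of_tendsto_of_tendsto_of_le_of_le tendsto_const_nhds hupper
      (fun n => tsum_nonneg fun i => sq_nonneg _) hbound
  -- part 4 : membership from the a.e. hypothesis
  have hsubD : ∀ x : G,
      Tendsto (fun n => hsInner e (π x ∘L Tn n ∘L adjoint (π x)) (Tn n)) atTop (𝓝 1) →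
      Tendsto (fun n => ∑' i, ‖(π x ∘L Tn n ∘L adjoint (π x) - Tn n) (e i)‖ ^ 2)
        atTop (𝓝 0) := by
    intro x hx
    have heq : ∀ n, ∑' i, ‖(π x ∘L Tn n ∘L adjoint (π x) - Tn n) (e i)‖ ^ 2
        = 2 - 2 * (hsInner e (π x ∘L Tn n ∘L adjoint (π x)) (Tn n)).re := fun n =>
      key_expand e _ _ (hAsum x n) (hsum n) (hA1 x n) (hnorm n)
    simp only [heq]
    have hre : Tendsto
        (fun n => (hsInner e (π x ∘L Tn n ∘L adjoint (π x)) (Tn n)).re) atTop (𝓝 1) := by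
      have := (Complex.continuous_re.tendsto 1).comp hx
      simpa [Function.comp_def] using this
    have := (tendsto_const_nhds (x := (2 : ℝ)) (f := atTop)).sub (hre.const_mul 2)
    simpa using this
  refine ⟨part1, fun x hx => part2 x hx, fun x y hx hy => part3 x y hx hy, ?_⟩
  refine measure_mono_null (fun x hx' hP => hx' (hsubD x hP)) (ae_iff.mp hae)
end

section
/- Let G be a second countable locally compact group, π a unitary representation of G on H, and D a dense subgroup of G such that the restriction of π to D (with the discrete topology) almost has invariant vectors. Then there exists an adapted probability measure μ on G such that 1 is an approximate eigenvalue of π(μ): there are unit vectors ξᵢ with ‖π(μ)ξᵢ − ξᵢ‖ → 0. -/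
open MeasureTheory ContinuousLinearMap Filter Topology
open scoped InnerProductSpace

/-- The support of a measure on a topological space: points all of whose neighbourhoods
have positive measure. -/
def measureSupport {G : Type*} [TopologicalSpace G] [MeasurableSpace G]
    (μ : Measure G) : Set G :=
  {x | ∀ U ∈ 𝓝 x, 0 < μ U}

lemma tail_norm_est {H : Type*} [NormedAddCommGroup H] [NormedSpace ℝ H]
    (a : ℕ → ℝ) (ha_pos : ∀ n, 0 < a n) (ha_sum : Summable a) (ha_tsum : ∑' n, a n = 1)
    (v : ℕ → H) (S : H) (hS : HasSum (fun n => a n • v n) S)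
    (i : ℕ) (b : ℝ) (hb : 0 ≤ b) (hv2 : ∀ n, ‖v n‖ ≤ 2)
    (hvsmall : ∀ n ≤ i, ‖v n‖ ≤ b)
    (hatail : ∑' n, a (n + (i + 1)) ≤ b) :
    ‖S‖ ≤ 3 * b := by
  have hsummable : Summable (fun n => ‖a n • v n‖) := by
    refine Summable.of_nonneg_of_le (fun n => norm_nonneg _) (fun n => ?_)
      (ha_sum.mul_right 2)
    rw [norm_smul, Real.norm_eq_abs, abs_of_pos (ha_pos n)]
    exact mul_le_mul_of_nonneg_left (hv2 n) (ha_pos n).le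
  have h4 : ‖S‖ ≤ ∑' n, ‖a n • v n‖ := by
    rw [← hS.tsum_eq]
    exact norm_tsum_le_tsum_norm hsummable
  have hsplit := Summable.sum_add_tsum_nat_add (f := fun n => ‖a n • v n‖) (i + 1) hsummable
  have hhead : ∑ n ∈ Finset.range (i + 1), ‖a n • v n‖ ≤ b := by
    calc ∑ n ∈ Finset.range (i + 1), ‖a n • v n‖
        ≤ ∑ n ∈ Finset.range (i + 1), a n * b := by
          refine Finset.sum_le_sum (fun n hn => ?_)
          rw [norm_smul, Real.norm_eq_abs, abs_of_pos (ha_pos n)]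
          exact mul_le_mul_of_nonneg_left
            (hvsmall n (Nat.lt_succ_iff.mp (Finset.mem_range.mp hn))) (ha_pos n).le
      _ = (∑ n ∈ Finset.range (i + 1), a n) * b := by rw [Finset.sum_mul]
      _ ≤ 1 * b := by
          refine mul_le_mul_of_nonneg_right ?_ hb
          rw [← ha_tsum]
          exact Summable.sum_le_tsum _ (fun n _ => (ha_pos n).le) ha_sum
      _ = b := one_mul _
  have htail : ∑' n, ‖a (n + (i + 1)) • v (n + (i + 1))‖ ≤ 2 * b := by
    have hts : Summable (fun n => ‖a (n + (i + 1)) • v (n + (i + 1))‖) :=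
      (summable_nat_add_iff (f := fun n => ‖a n • v n‖) (i + 1)).mpr hsummable
    calc ∑' n, ‖a (n + (i + 1)) • v (n + (i + 1))‖
        ≤ ∑' n, a (n + (i + 1)) * 2 := by
          refine Summable.tsum_le_tsum (fun n => ?_) hts
            (((summable_nat_add_iff (f := a) (i + 1)).mpr ha_sum).mul_right 2)
          rw [norm_smul, Real.norm_eq_abs, abs_of_pos (ha_pos _)]
          exact mul_le_mul_of_nonneg_left (hv2 _) (ha_pos _).le
      _ = (∑' n, a (n + (i + 1))) * 2 := tsum_mul_right
      _ ≤ b * 2 := by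
          refine mul_le_mul_of_nonneg_right hatail (by norm_num)
      _ = 2 * b := by ring
  calc ‖S‖ ≤ ∑' n, ‖a n • v n‖ := h4
    _ = ∑ n ∈ Finset.range (i + 1), ‖a n • v n‖
        + ∑' n, ‖a (n + (i + 1)) • v (n + (i + 1))‖ := hsplit.symm
    _ ≤ b + 2 * b := add_le_add hhead htail
    _ = 3 * b := by ring


set_option maxHeartbeats 1000000 in
/-- Let `G` be a second countable locally compact group, `π` a unitary representation of
`G`, and `D` a dense subgroup such that `π|_D` almost has invariant vectors (for finite
subsets of `D`). Then there is an adapted probability measure `μ` on `G` (the subgroup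
generated by its support is dense) such that `1` is an approximate eigenvalue of the
weakly-defined operator `π(μ)`. -/
theorem exists_adapted_measure_with_approximate_eigenvalue_one
    {G H : Type*} [Group G] [TopologicalSpace G] [IsTopologicalGroup G]
    [LocallyCompactSpace G] [SecondCountableTopology G] [MeasurableSpace G] [BorelSpace G]
    [NormedAddCommGroup H] [InnerProductSpace ℂ H] [CompleteSpace H]
    (π : G → H →L[ℂ] H) (hπu : ∀ g, π g ∈ unitary (H →L[ℂ] H))
    (hπ1 : π 1 = 1) (hπm : ∀ g h, π (g * h) = π g ∘L π h)
    (hπc : ∀ ξ : H, Continuous fun g => π g ξ)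
    (D : Subgroup G) (hD : Dense (D : Set G))
    (halm : ∀ F : Finset G, (↑F : Set G) ⊆ (D : Set G) → ∀ ε > 0,
      ∃ ξ : H, ‖ξ‖ = 1 ∧ ∀ g ∈ F, ‖π g ξ - ξ‖ < ε) :
    ∃ μ : Measure G, IsProbabilityMeasure μ ∧
      Dense ((Subgroup.closure (measureSupport μ) : Subgroup G) : Set G) ∧
      ∃ A : H →L[ℂ] H, (∀ ξ η : H, ⟪A ξ, η⟫_ℂ = ∫ x, ⟪π x ξ, η⟫_ℂ ∂μ) ∧
        ∃ ξ : ℕ → H, (∀ i, ‖ξ i‖ = 1) ∧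
          Tendsto (fun i => ‖A (ξ i) - ξ i‖) atTop (𝓝 0) := by
  classical
  -- π is a representation by isometries
  have hiso : ∀ x (v : H), ‖π x v‖ = ‖v‖ := by
    intro x v
    have h1 : star (π x) * π x = 1 := (hπu x).1
    have h2 : ⟪π x v, π x v⟫_ℂ = ⟪v, v⟫_ℂ := by
      have hadj : adjoint (π x) (π x v) = v := by
        rw [← ContinuousLinearMap.star_eq_adjoint]
        have := congrArg (fun T : H →L[ℂ] H => T v) h1
        simpa using this
      calc ⟪π x v, π x v⟫_ℂ = ⟪adjoint (π x) (π x v), v⟫_ℂ := by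
              rw [ContinuousLinearMap.adjoint_inner_left]
        _ = ⟪v, v⟫_ℂ := by rw [hadj]
    rw [inner_self_eq_norm_sq_to_K, inner_self_eq_norm_sq_to_K] at h2
    have h4 : (‖π x v‖ : ℝ) ^ 2 = ‖v‖ ^ 2 := by exact_mod_cast h2
    nlinarith [norm_nonneg (π x v), norm_nonneg v]
  -- dense sequence in D
  haveI : Nonempty (↥D) := ⟨1⟩
  haveI : TopologicalSpace.SeparableSpace ↥D :=
    (inferInstance : TopologicalSpace.SeparableSpace (D : Set G))
  set g : ℕ → G := fun n => ((TopologicalSpace.denseSeq ↥D n : ↥D) : G) with hgdef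
  have hgD : ∀ n, g n ∈ D := fun n => (TopologicalSpace.denseSeq ↥D n).2
  have hgdense : DenseRange g :=
    DenseRange.comp hD.denseRange_val (TopologicalSpace.denseRange_denseSeq ↥D)
      continuous_subtype_val
  -- real coefficients
  set a : ℕ → ℝ := fun n => (2⁻¹ : ℝ) ^ (n + 1) with hadef
  have ha_pos : ∀ n, 0 < a n := fun n => by positivity
  have ha_sum : Summable a := by
    simp only [hadef, pow_succ]
    exact (summable_geometric_of_lt_one (by norm_num) (by norm_num)).mul_right _
  have ha_tsum : ∑' n, a n = 1 := by
    simp only [hadef, pow_succ]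
    rw [tsum_mul_right, tsum_geometric_of_lt_one (by norm_num) (by norm_num)]
    norm_num
  -- the measure
  set μ : Measure G := Measure.sum (fun n => ((2 : ENNReal)⁻¹ ^ (n + 1)) • Measure.dirac (g n))
    with hμdef
  have hcoef_tsum : ∑' n : ℕ, ((2 : ENNReal))⁻¹ ^ (n + 1) = 1 := by
    simp only [pow_succ]
    rw [ENNReal.tsum_mul_right, ENNReal.tsum_geometric, ENNReal.one_sub_inv_two, inv_inv,
      mul_comm]
    exact ENNReal.inv_mul_cancel (by norm_num) (by norm_num)
  have hcoef_toReal : ∀ n : ℕ, (((2 : ENNReal))⁻¹ ^ (n + 1)).toReal = a n := by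
    intro n
    rw [ENNReal.toReal_pow, ENNReal.toReal_inv]
    norm_num [hadef]
  have hprob : IsProbabilityMeasure μ := by
    constructor
    rw [hμdef, Measure.sum_apply _ MeasurableSet.univ]
    simp only [Measure.smul_apply, smul_eq_mul,
      Measure.dirac_apply_of_mem (Set.mem_univ _), mul_one]
    exact hcoef_tsum
  haveI := hprob
  -- the support contains the range of g
  have hsupp : Set.range g ⊆ measureSupport μ := by
    rintro _ ⟨n, rfl⟩ U hU
    have h1 : ((2 : ENNReal)⁻¹ ^ (n + 1)) • Measure.dirac (g n) ≤ μ := Measure.le_sum _ n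
    have h2 : (0 : ENNReal) < (((2 : ENNReal)⁻¹ ^ (n + 1)) • Measure.dirac (g n)) U := by
      simp only [Measure.smul_apply, smul_eq_mul,
        Measure.dirac_apply_of_mem (mem_of_mem_nhds hU), mul_one]
      exact ENNReal.pow_pos (ENNReal.inv_pos.mpr (by norm_num)) _
    exact lt_of_lt_of_le h2 (h1 U)
  have hdense : Dense ((Subgroup.closure (measureSupport μ) : Subgroup G) : Set G) :=
    hgdense.mono (fun x hx => Subgroup.subset_closure (hsupp hx))
  -- the operator A
  have hnorm_term : ∀ n, ‖a n • π (g n)‖ ≤ a n := by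
    intro n
    rw [norm_smul, Real.norm_eq_abs, abs_of_pos (ha_pos n)]
    have : ‖π (g n)‖ ≤ 1 := by
      refine ContinuousLinearMap.opNorm_le_bound _ zero_le_one (fun v => ?_)
      rw [hiso, one_mul]
    nlinarith [ha_pos n, norm_nonneg (π (g n))]
  have hsum : Summable (fun n => a n • π (g n)) :=
    Summable.of_norm_bounded ha_sum hnorm_term
  set A : H →L[ℂ] H := ∑' n, a n • π (g n) with hAdef
  have hA : HasSum (fun n => a n • π (g n)) A := hsum.hasSum
  -- applied to vectors
  have hAapp : ∀ ξ : H, HasSum (fun n => a n • π (g n) ξ) (A ξ) := by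
    intro ξ
    have := hA.mapL (ContinuousLinearMap.apply ℂ H ξ)
    simpa using this
  -- the weak integral identity
  have hinner : ∀ ξ η : H, ⟪A ξ, η⟫_ℂ = ∫ x, ⟪π x ξ, η⟫_ℂ ∂μ := by
    intro ξ η
    have h2 : HasSum (fun n => ⟪η, a n • π (g n) ξ⟫_ℂ) ⟪η, A ξ⟫_ℂ :=
      (hAapp ξ).mapL (innerSL ℂ η)
    have h3 : HasSum (fun n => ⟪a n • π (g n) ξ, η⟫_ℂ) ⟪A ξ, η⟫_ℂ := by
      have := h2.star
      simpa only [Complex.star_def, inner_conj_symm] using this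
    have hfc : Continuous (fun x : G => ⟪π x ξ, η⟫_ℂ) :=
      Continuous.inner (hπc ξ) continuous_const
    have hInt : Integrable (fun x : G => ⟪π x ξ, η⟫_ℂ) μ := by
      refine (integrable_const (‖ξ‖ * ‖η‖)).mono' hfc.aestronglyMeasurable ?_
      filter_upwards with x
      calc ‖⟪π x ξ, η⟫_ℂ‖ ≤ ‖π x ξ‖ * ‖η‖ := norm_inner_le_norm _ _
        _ = ‖ξ‖ * ‖η‖ := by rw [hiso]
    have hint_eq : ∫ x, ⟪π x ξ, η⟫_ℂ ∂μ = ∑' n, a n • ⟪π (g n) ξ, η⟫_ℂ := by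
      rw [hμdef, integral_sum_measure hInt]
      congr 1
      funext n
      rw [integral_smul_measure, integral_dirac' _ _ hfc.stronglyMeasurable, hcoef_toReal]
    rw [hint_eq]
    refine h3.tsum_eq.symm.trans ?_
    congr 1
    funext n
    rw [RCLike.real_smul_eq_coe_smul (K := ℂ), inner_smul_left, RCLike.conj_ofReal,
      RCLike.real_smul_eq_coe_mul]
  -- the approximate eigenvectors
  have key : ∀ i : ℕ, ∃ ξ : H, ‖ξ‖ = 1 ∧ ∀ n ≤ i, ‖π (g n) ξ - ξ‖ < (2⁻¹ : ℝ) ^ i := by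
    intro i
    obtain ⟨ξ, h1, h2⟩ := halm ((Finset.range (i + 1)).image g)
      (by
        intro x hx
        simp only [Finset.coe_image, Set.mem_image] at hx
        obtain ⟨n, -, rfl⟩ := hx
        exact hgD n)
      ((2⁻¹ : ℝ) ^ i) (by positivity)
    exact ⟨ξ, h1, fun n hn => h2 _ (Finset.mem_image_of_mem g
      (Finset.mem_range.mpr (Nat.lt_succ_of_le hn)))⟩
  choose ξs hξs1 hξs2 using key
  refine ⟨μ, hprob, hdense, A, hinner, ξs, hξs1, ?_⟩
  -- the norm estimate
  have hbound : ∀ i, ‖A (ξs i) - ξs i‖ ≤ 3 * (2⁻¹ : ℝ) ^ i := by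
    intro i
    have hv2 : ∀ n, ‖π (g n) (ξs i) - ξs i‖ ≤ 2 := by
      intro n
      calc ‖π (g n) (ξs i) - ξs i‖ ≤ ‖π (g n) (ξs i)‖ + ‖ξs i‖ := norm_sub_le _ _
        _ = 2 := by rw [hiso, hξs1]; norm_num
    have hS : HasSum (fun n => a n • (π (g n) (ξs i) - ξs i)) (A (ξs i) - ξs i) := by
      have h1 := hAapp (ξs i)
      have h2 : HasSum (fun n => a n • ξs i) (ξs i) := by
        have := ha_sum.hasSum.smul_const (ξs i)
        rwa [ha_tsum, one_smul] at this
      have h12 := h1.sub h2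
      simp only [← smul_sub] at h12
      exact h12
    have hatail : ∑' n, a (n + (i + 1)) ≤ (2⁻¹ : ℝ) ^ i := by
      have he : (fun n => a (n + (i + 1))) = fun n => (2⁻¹ : ℝ) ^ (i + 1) * a n := by
        funext n
        simp only [hadef]
        ring
      rw [he, tsum_mul_left, ha_tsum, mul_one]
      exact pow_le_pow_of_le_one (by norm_num) (by norm_num) (Nat.le_succ i)
    exact tail_norm_est a ha_pos ha_sum ha_tsum _ _ hS i ((2⁻¹ : ℝ) ^ i) (by positivity)
      hv2 (fun n hn => (hξs2 i n hn).le) hatail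
  refine squeeze_zero (fun i => norm_nonneg _) hbound ?_
  have := (tendsto_pow_atTop_nhds_zero_of_lt_one (r := (2⁻¹ : ℝ)) (by norm_num)
    (by norm_num)).const_mul 3
  simpa using this
end
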